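/- arXiv:2402.19232 — 2 statements merged into one kernel-verified Lean document; each statement's English description precedes it below -/
import Mathlib

section
/- Let φ be a 3-SAT instance with |L| ≥ 2 clauses over V variables, and let (x, z, y) be a feasible solution of the associated DRP instance I(φ). Then there exists exactly one index k ∈ {1,…,6|L|+1} such that (x_k)_{V+l} = 1 for every l ∈ {1,…,|L|}. -/
/-- A decision tree over `M` binary attributes: a finite rooted full binary tree
whose internal nodes carry attribute labels in `Fin M`. -/
inductive DTree (M : ℕ) : Type where
  | leaf : DTree M
  | node (f : Fin M) (l r : DTree M) : DTree M

namespace DTree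

/-- The leaves of a decision tree, identified by their root-to-leaf paths
(`false` = left branch, i.e. attribute value 0; `true` = right branch, i.e. value 1). -/
def leaves {M : ℕ} : DTree M → Finset (List Bool)
  | .leaf => {[]}
  | .node _ l r => (l.leaves.image (List.cons false)) ∪ (r.leaves.image (List.cons true))

/-- `Φ⁺(v)`: the attributes forced to value 1 on the root-to-`v` path. -/
def phiPos {M : ℕ} : DTree M → List Bool → Finset (Fin M)
  | .node f _ r, true :: p => insert f (r.phiPos p)
  | .node _ l _, false :: p => l.phiPos p
  | _, _ => ∅

/-- `Φ⁻(v)`: the attributes forced to value 0 on the root-to-`v` path. -/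
def phiNeg {M : ℕ} : DTree M → List Bool → Finset (Fin M)
  | .node f l _, false :: p => insert f (l.phiNeg p)
  | .node _ _ r, true :: p => r.phiNeg p
  | _, _ => ∅

end DTree

/-- A DRP (dataset reconstruction problem) instance: a finite forest of decision
trees over `M` binary attributes, counts `n_{t,v,c}` for every tree `t`, node `v`
(identified by its path) and class `c : C`, and a set `B ⊆ ℕ`. -/
structure DRP (C : Type) (N M : ℕ) where
  numTrees : ℕ
  tree : Fin numTrees → DTree M
  count : Fin numTrees → List Bool → C → ℕ
  B : Set ℕ

/-- Feasibility of a solution `(x, z, y)` of a DRP instance. -/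
def IsFeasible {C : Type} [DecidableEq C] {N M : ℕ} (D : DRP C N M)
    (x : Fin N → Fin M → Bool) (z : Fin N → C)
    (y : Fin D.numTrees → List Bool → Fin N → ℕ) : Prop :=
  (∀ t (k : Fin N), (∑ v ∈ (D.tree t).leaves, y t v k) ∈ D.B) ∧
  (∀ t, ∀ v ∈ (D.tree t).leaves, ∀ c : C,
      (∑ k ∈ Finset.univ.filter (fun k : Fin N => z k = c), y t v k) = D.count t v c) ∧
  (∀ t, ∀ v ∈ (D.tree t).leaves, ∀ k : Fin N, 0 < y t v k →
      (∀ i ∈ (D.tree t).phiPos v, x k i = true) ∧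
      (∀ i ∈ (D.tree t).phiNeg v, x k i = false))

/-- A literal over `V` boolean variables: a variable index together with a polarity
(`true` = the variable itself, `false` = its negation). -/
abbrev Lit (V : ℕ) := Fin V × Bool

/-- A 3-clause: a disjunction of three literals. -/
abbrev Clause3 (V : ℕ) := Lit V × Lit V × Lit V

/-- A 3-SAT instance over `V` variables: a finite list of 3-clauses. -/
abbrev CNF3 (V : ℕ) := List (Clause3 V)

def litSat {V : ℕ} (u : Fin V → Bool) (l : Lit V) : Prop := u l.1 = l.2

def clauseSat {V : ℕ} (u : Fin V → Bool) (cl : Clause3 V) : Prop :=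
  litSat u cl.1 ∨ litSat u cl.2.1 ∨ litSat u cl.2.2

/-- Satisfiability of a 3-SAT instance. -/
def Satisfiable {V : ℕ} (φ : CNF3 V) : Prop := ∃ u : Fin V → Bool, ∀ cl ∈ φ, clauseSat u cl

/-- Attribute `j ∈ {1,…,V}` among the `V + L` attributes of the construction. -/
def varAttr {V : ℕ} (L : ℕ) (j : Fin V) : Fin (V + L) := Fin.castAdd L j

/-- Attribute `V + l` among the `V + L` attributes of the construction. -/
def clauseAttr {V : ℕ} (L : ℕ) (l : Fin L) : Fin (V + L) := Fin.natAdd V l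

/-- Perfect binary tree of depth 3 branching successively on attributes `a`, `b`, `c`. -/
def perfect3 {M : ℕ} (a b c : Fin M) : DTree M :=
  .node a
    (.node b (.node c .leaf .leaf) (.node c .leaf .leaf))
    (.node b (.node c .leaf .leaf) (.node c .leaf .leaf))

/-- The tree associated with clause `l`: the root branches on attribute `V + l`, its left
child is a leaf, and its right subtree is a perfect binary tree of depth 3 branching
successively on the three variables of the clause. -/
def clauseTree {V : ℕ} (L : ℕ) (l : Fin L) (cl : Clause3 V) : DTree (V + L) :=
  .node (clauseAttr L l) .leaf
    (perfect3 (varAttr L cl.1.1) (varAttr L cl.2.1.1) (varAttr L cl.2.2.1))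

/-- Counts for the tree of clause `cl`: the left leaf carries `6|L| - 6`; the eight leaves
of the perfect subtree correspond to the eight 0/1 assignments of the clause's variables
and carry 1 if the assignment satisfies the clause, 0 otherwise. -/
def clauseCount {V : ℕ} (L : ℕ) (cl : Clause3 V) : List Bool → ℕ
  | [false] => 6 * L - 6
  | [true, b1, b2, b3] =>
      if b1 = cl.1.2 ∨ b2 = cl.2.1.2 ∨ b3 = cl.2.2.2 then 1 else 0
  | _ => 0

/-- A right chain: each listed attribute gives an internal node on the rightmost path
whose left child is a leaf. -/
def rightChain {M : ℕ} : List (Fin M) → DTree M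
  | [] => .leaf
  | f :: fs => .node f .leaf (rightChain fs)

/-- The auxiliary tree: its right path has, at each depth `d ∈ {0,…,L-1}`, an internal
node branching on attribute `V + d + 1`. -/
def auxTree (V L : ℕ) : DTree (V + L) :=
  rightChain ((List.finRange L).map (clauseAttr L))

/-- Counts for the auxiliary tree: the left leaf at depth 1 carries `6L - 6`, the left
leaf at depth 2 carries `6`, the other left leaves carry `0`, and the rightmost leaf
(at depth `L`) carries `1`. -/
def auxCount (L : ℕ) (p : List Bool) : ℕ :=
  if p = [false] then 6 * L - 6
  else if p = [true, false] then 6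
  else if p = List.replicate L true then 1
  else 0

/-- The DRP instance `I(φ)` associated with a 3-SAT instance `φ`: a single class,
`N = 6|L| + 1` examples, `M = V + |L|` binary attributes, `B = {1}`, one tree per
clause plus the auxiliary tree. -/
def drpOf {V : ℕ} (φ : CNF3 V) : DRP Unit (6 * φ.length + 1) (V + φ.length) where
  numTrees := φ.length + 1
  tree := fun t =>
    if h : (t : ℕ) < φ.length then clauseTree φ.length ⟨t, h⟩ (φ.get ⟨t, h⟩)
    else auxTree V φ.length
  count := fun t p _ =>
    if h : (t : ℕ) < φ.length then clauseCount φ.length (φ.get ⟨t, h⟩) p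
    else auxCount φ.length p
  B := {1}

/-!
The auxiliary tree is a right chain on the clause attributes `V + 1, …, V + |L|`, and every
example reaches exactly one of its leaves (`B = {1}`). An example reaches the rightmost leaf
exactly when all clause attributes are 1, since every other leaf sets one of them to 0. That
leaf has count 1 and there is a single class, so exactly one example reaches it.
-/

theorem Fintype.existsUnique_pos_of_sum_eq_one {ι : Type*} [Fintype ι] {f : ι → ℕ}
    (h : ∑ i, f i = 1) : ∃! i, 0 < f i := by
  classical
  obtain ⟨i, -, hi⟩ := Finset.exists_ne_zero_of_sum_ne_zero (h ▸ one_ne_zero)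
  refine ⟨i, Nat.pos_of_ne_zero hi, fun j hj => ?_⟩
  by_contra hji
  have : f j + f i ≤ ∑ k, f k := by
    rw [← Finset.sum_pair hji]
    exact Finset.sum_le_sum_of_subset (Finset.subset_univ _)
  omega

section RightChain

variable {M : ℕ}

theorem replicate_mem_leaves_rightChain (fs : List (Fin M)) :
    List.replicate fs.length true ∈ (rightChain fs).leaves := by
  induction fs with
  | nil => simp [rightChain, DTree.leaves]
  | cons f fs ih => simpa [rightChain, DTree.leaves, List.replicate_succ] using ih

theorem mem_phiPos_rightChain_replicate {fs : List (Fin M)} {a : Fin M} (ha : a ∈ fs) :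
    a ∈ (rightChain fs).phiPos (List.replicate fs.length true) := by
  induction fs with
  | nil => simp at ha
  | cons f fs ih =>
    rw [List.length_cons, List.replicate_succ, rightChain, DTree.phiPos, Finset.mem_insert]
    exact (List.mem_cons.1 ha).imp id ih

theorem exists_mem_phiNeg_rightChain {fs : List (Fin M)} {v : List Bool}
    (hv : v ∈ (rightChain fs).leaves) (hne : v ≠ List.replicate fs.length true) :
    ∃ a ∈ fs, a ∈ (rightChain fs).phiNeg v := by
  induction fs generalizing v with
  | nil => simp_all [rightChain, DTree.leaves]
  | cons f fs ih =>
    simp only [rightChain, DTree.leaves, Finset.mem_union, Finset.mem_image,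
      Finset.mem_singleton] at hv
    rcases hv with ⟨w, rfl, rfl⟩ | ⟨w, hw, rfl⟩
    · exact ⟨f, List.mem_cons_self, by simp [rightChain, DTree.phiNeg]⟩
    · obtain ⟨a, ha, hneg⟩ := ih hw (by rintro rfl; simp [List.replicate_succ] at hne)
      exact ⟨a, List.mem_cons_of_mem _ ha, by simpa [rightChain, DTree.phiNeg] using hneg⟩

end RightChain

namespace IsFeasible

variable {C : Type} [DecidableEq C] {N M : ℕ} {D : DRP C N M} {x : Fin N → Fin M → Bool}
  {z : Fin N → C} {y : Fin D.numTrees → List Bool → Fin N → ℕ} {t : Fin D.numTrees}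
  {v : List Bool} {k : Fin N}

theorem sum_eq_count [Subsingleton C] (h : IsFeasible D x z y) (hv : v ∈ (D.tree t).leaves)
    (c : C) : ∑ k, y t v k = D.count t v c := by
  rw [← h.2.1 t v hv c, Finset.filter_true_of_mem fun k _ => Subsingleton.elim (z k) c]

theorem eq_true_of_mem_phiPos (h : IsFeasible D x z y) (hv : v ∈ (D.tree t).leaves)
    (hk : 0 < y t v k) {i : Fin M} (hi : i ∈ (D.tree t).phiPos v) : x k i = true :=
  (h.2.2 t v hv k hk).1 i hi

theorem eq_false_of_mem_phiNeg (h : IsFeasible D x z y) (hv : v ∈ (D.tree t).leaves)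
    (hk : 0 < y t v k) {i : Fin M} (hi : i ∈ (D.tree t).phiNeg v) : x k i = false :=
  (h.2.2 t v hv k hk).2 i hi

theorem pos_of_forall_ne (h : IsFeasible D x z y) (hB : D.B = {1})
    (hv : v ∈ (D.tree t).leaves)
    (hother : ∀ w ∈ (D.tree t).leaves, w ≠ v → ∃ i ∈ (D.tree t).phiNeg w, x k i = true) :
    0 < y t v k := by
  have hzero : ∀ w ∈ (D.tree t).leaves, w ≠ v → y t w k = 0 := by
    intro w hw hwv
    obtain ⟨i, hi, hxi⟩ := hother w hw hwv
    by_contra hpos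
    simp [h.eq_false_of_mem_phiNeg hw (Nat.pos_of_ne_zero hpos) hi] at hxi
  have hone : ∑ w ∈ (D.tree t).leaves, y t w k = 1 := by simpa [hB] using h.1 t k
  rw [Finset.sum_eq_single_of_mem v hv hzero] at hone
  omega

theorem pos_rightChain_replicate_iff (h : IsFeasible D x z y) (hB : D.B = {1})
    {fs : List (Fin M)} (ht : D.tree t = rightChain fs) :
    0 < y t (List.replicate fs.length true) k ↔ ∀ a ∈ fs, x k a = true := by
  have htop : List.replicate fs.length true ∈ (D.tree t).leaves :=
    ht ▸ replicate_mem_leaves_rightChain fs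
  refine ⟨fun hk a ha => h.eq_true_of_mem_phiPos htop hk ?_, fun hx => ?_⟩
  · exact ht ▸ mem_phiPos_rightChain_replicate ha
  · refine h.pos_of_forall_ne hB htop fun w hw hne => ?_
    rw [ht] at hw ⊢
    obtain ⟨a, ha, hneg⟩ := exists_mem_phiNeg_rightChain hw hne
    exact ⟨a, hneg, hx a ha⟩

end IsFeasible

theorem auxCount_replicate (L : ℕ) : auxCount L (List.replicate L true) = 1 := by
  rcases L with _ | _ | _ | L <;> simp [auxCount, List.replicate_succ]

theorem drpOf_tree_last {V : ℕ} (φ : CNF3 V) :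
    (drpOf φ).tree (Fin.last φ.length) =
      rightChain ((List.finRange φ.length).map (clauseAttr φ.length)) := by
  simp [drpOf, auxTree]

theorem drpOf_count_last {V : ℕ} (φ : CNF3 V) (c : Unit) :
    (drpOf φ).count (Fin.last φ.length) (List.replicate φ.length true) c = 1 := by
  simp [drpOf, auxCount_replicate]

theorem existsUnique_allOnes_example_general {V : ℕ} (φ : CNF3 V)
    (x : Fin (6 * φ.length + 1) → Fin (V + φ.length) → Bool)
    (z : Fin (6 * φ.length + 1) → Unit)
    (y : Fin (drpOf φ).numTrees → List Bool → Fin (6 * φ.length + 1) → ℕ)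
    (hfeas : IsFeasible (drpOf φ) x z y) :
    ∃! k : Fin (6 * φ.length + 1), ∀ l : Fin φ.length, x k (clauseAttr φ.length l) = true := by
  set fs := (List.finRange φ.length).map (clauseAttr (V := V) φ.length)
  have hlen : fs.length = φ.length := by simp [fs]
  have htop : List.replicate fs.length true ∈ ((drpOf φ).tree (Fin.last φ.length)).leaves :=
    drpOf_tree_last φ ▸ replicate_mem_leaves_rightChain fs
  have hsum : ∑ k, y (Fin.last φ.length) (List.replicate fs.length true) k = 1 := by
    rw [hfeas.sum_eq_count htop (), hlen, drpOf_count_last]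
  refine (existsUnique_congr fun k => ?_).1 (Fintype.existsUnique_pos_of_sum_eq_one hsum)
  rw [hfeas.pos_rightChain_replicate_iff rfl (drpOf_tree_last φ)]
  simp

/-- In any feasible solution `(x, z, y)` of the DRP instance `I(φ)` associated with a
3-SAT instance `φ` with `|L| ≥ 2` clauses over `V` variables, there exists exactly one
index `k` such that `(x_k)_{V+l} = 1` for every `l ∈ {1,…,|L|}`. -/
theorem existsUnique_allOnes_example {V : ℕ} (φ : CNF3 V) (hL : 2 ≤ φ.length)
    (x : Fin (6 * φ.length + 1) → Fin (V + φ.length) → Bool)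
    (z : Fin (6 * φ.length + 1) → Unit)
    (y : Fin (drpOf φ).numTrees → List Bool → Fin (6 * φ.length + 1) → ℕ)
    (hfeas : IsFeasible (drpOf φ) x z y) :
    ∃! k : Fin (6 * φ.length + 1), ∀ l : Fin φ.length, x k (clauseAttr φ.length l) = true :=
  existsUnique_allOnes_example_general φ x z y hfeas
end

section
/- Let φ be a 3-SAT instance with |L| ≥ 2 clauses over V variables, let (x, z, y) be a feasible solution of the associated DRP instance I(φ), and let k be an index with (x_k)_{V+l} = 1 for every l ∈ {1,…,|L|}. Then the assignment u ∈ {0,1}^V defined by u_j = (x_k)_j for j ∈ {1,…,V} satisfies every clause of φ. -/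

lemma mem_leaves_clauseTree {V L : ℕ} (l : Fin L) (cl : Clause3 V) (v : List Bool)
    (hv : v ∈ (clauseTree L l cl).leaves) :
    v = [false] ∨ ∃ b1 b2 b3 : Bool, v = [true, b1, b2, b3] := by
  simp only [clauseTree, perfect3, DTree.leaves, Finset.mem_union, Finset.mem_image,
    Finset.mem_singleton] at hv
  aesop

/-- Let `(x, z, y)` be a feasible solution of `I(φ)` (for a 3-SAT instance `φ` with
`|L| ≥ 2` clauses over `V` variables) and let `k` be an index whose attributes
`V+1,…,V+|L|` are all 1. Then the assignment `u_j := (x_k)_j` for `j ∈ {1,…,V}`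
satisfies every clause of `φ`. -/
theorem allOnes_example_gives_satisfying_assignment {V : ℕ} (φ : CNF3 V)
    (hL : 2 ≤ φ.length)
    (x : Fin (6 * φ.length + 1) → Fin (V + φ.length) → Bool)
    (z : Fin (6 * φ.length + 1) → Unit)
    (y : Fin (drpOf φ).numTrees → List Bool → Fin (6 * φ.length + 1) → ℕ)
    (hfeas : IsFeasible (drpOf φ) x z y)
    (k : Fin (6 * φ.length + 1))
    (hk : ∀ l : Fin φ.length, x k (clauseAttr φ.length l) = true) :
    ∀ cl ∈ φ, clauseSat (fun j : Fin V => x k (varAttr φ.length j)) cl := by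
  obtain ⟨hB, hcount, hforce⟩ := hfeas
  intro cl hcl
  obtain ⟨l, hl⟩ := List.mem_iff_get.mp hcl
  have hlt : (l : ℕ) < φ.length := l.isLt
  set t : Fin (drpOf φ).numTrees := ⟨l, Nat.lt_succ_of_lt hlt⟩ with ht
  have htree : (drpOf φ).tree t = clauseTree φ.length l cl := by
    simp only [drpOf, t]
    rw [dif_pos hlt]
    rw [← hl]
  have h1 : (∑ v ∈ ((drpOf φ).tree t).leaves, y t v k) = 1 := hB t k
  have hpos : ∃ v ∈ ((drpOf φ).tree t).leaves, 0 < y t v k := by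
    by_contra h
    push_neg at h
    have h0 : (∑ v ∈ ((drpOf φ).tree t).leaves, y t v k) = 0 :=
      Finset.sum_eq_zero fun v hv => Nat.le_zero.mp (h v hv)
    omega
  obtain ⟨v, hv, hyv⟩ := hpos
  have hforces := hforce t v hv k hyv
  have hc := hcount t v hv ()
  rw [Finset.filter_true_of_mem (fun _ _ => Subsingleton.elim _ _)] at hc
  have hcv : (drpOf φ).count t v () = clauseCount φ.length cl v := by
    simp only [drpOf, t]
    rw [dif_pos hlt]
    rw [← hl]
  rw [hcv] at hc
  have hle : y t v k ≤ ∑ k' ∈ Finset.univ, y t v k' :=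
    Finset.single_le_sum (fun _ _ => Nat.zero_le _) (Finset.mem_univ k)
  have hne : clauseCount φ.length cl v ≠ 0 := by omega
  rw [htree] at hv hforces
  obtain ⟨hP, hN⟩ := hforces
  rcases mem_leaves_clauseTree l cl v hv with rfl | ⟨b1, b2, b3, rfl⟩
  · exfalso
    have hx := hN (clauseAttr φ.length l) (by simp [clauseTree, DTree.phiNeg])
    rw [hk l] at hx
    simp at hx
  · have hsat : b1 = cl.1.2 ∨ b2 = cl.2.1.2 ∨ b3 = cl.2.2.2 := by
      by_contra h
      push_neg at h
      simp [clauseCount, h.1, h.2.1, h.2.2] at hne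
    have hx1 : x k (varAttr φ.length cl.1.1) = b1 := by
      cases b1
      · exact hN _ (by cases b2 <;> cases b3 <;> simp [clauseTree, perfect3, DTree.phiNeg])
      · exact hP _ (by cases b2 <;> cases b3 <;> simp [clauseTree, perfect3, DTree.phiPos])
    have hx2 : x k (varAttr φ.length cl.2.1.1) = b2 := by
      cases b2
      · exact hN _ (by cases b1 <;> cases b3 <;> simp [clauseTree, perfect3, DTree.phiNeg])
      · exact hP _ (by cases b1 <;> cases b3 <;> simp [clauseTree, perfect3, DTree.phiPos])
    have hx3 : x k (varAttr φ.length cl.2.2.1) = b3 := by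
      cases b3
      · exact hN _ (by cases b1 <;> cases b2 <;> simp [clauseTree, perfect3, DTree.phiNeg])
      · exact hP _ (by cases b1 <;> cases b2 <;> simp [clauseTree, perfect3, DTree.phiPos])
    rcases hsat with h | h | h
    · exact Or.inl (hx1.trans h)
    · exact Or.inr (Or.inl (hx2.trans h))
    · exact Or.inr (Or.inr (hx3.trans h))
end
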